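/- For every permutation σ of a finite set J with disjoint cycle decomposition σ = σ₁⋯σ_l, the number of pair partitions π of {1,2} × J satisfying Perm(π) = σ equals 2^{Σ_{i=1}^{l}(|σ_i| − 1)}, where |σ_i| is the length of the cycle σ_i. -/

import Mathlib

open Equiv Finset

namespace CountPairingsAux

variable {n : ℕ} (σ : Equiv.Perm (Fin n))

/-- `j` is the minimum of its `σ`-cycle. -/
def Pmin (j : Fin n) : Prop := ∀ j' : Fin n, σ.SameCycle j j' → j ≤ j'

/-- The pairing associated to a level map `a`. -/
def fA (a : Fin n → Bool) : Bool × Fin n → Bool × Fin n :=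
  fun p => if p.1 = a p.2 then (!(a (σ p.2)), σ p.2) else (a (σ⁻¹ p.2), σ⁻¹ p.2)

lemma fA_invol (a : Fin n → Bool) : Function.Involutive (fA σ a) := by
  rintro ⟨b, j⟩
  by_cases h : b = a j
  · have h1 : fA σ a (b, j) = (!(a (σ j)), σ j) := if_pos h
    rw [h1]
    have h2 : fA σ a (!(a (σ j)), σ j) = (a (σ⁻¹ (σ j)), σ⁻¹ (σ j)) :=
      if_neg (by simp)
    rw [h2]
    simp [h]
  · have hb : b = !(a j) := by revert h; cases b <;> cases (a j) <;> simp
    have h1 : fA σ a (b, j) = (a (σ⁻¹ j), σ⁻¹ j) := if_neg h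
    rw [h1]
    have h2 : fA σ a (a (σ⁻¹ j), σ⁻¹ j) = (!(a (σ (σ⁻¹ j))), σ (σ⁻¹ j)) :=
      if_pos rfl
    rw [h2]
    simp [hb]

/-- The pairing as a permutation. -/
def piA (a : Fin n → Bool) : Equiv.Perm (Bool × Fin n) :=
  (fA_invol σ a).toPerm

lemma piA_apply (a : Fin n → Bool) (p : Bool × Fin n) : piA σ a p = fA σ a p := rfl

lemma piA_apply_a (a : Fin n → Bool) (j : Fin n) :
    piA σ a (a j, j) = (!(a (σ j)), σ j) := if_pos rfl

lemma piA_apply_na (a : Fin n → Bool) (j : Fin n) :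
    piA σ a (!(a j), j) = (a (σ⁻¹ j), σ⁻¹ j) := if_neg (by simp)

lemma piA_ne (a : Fin n → Bool) (p : Bool × Fin n) : piA σ a p ≠ p := by
  obtain ⟨b, j⟩ := p
  by_cases h : b = a j
  · rw [show (b, j) = (a j, j) by rw [h], piA_apply_a]
    intro hc
    have h1 : σ j = j := congrArg Prod.snd hc
    have h2 : (!(a (σ j))) = a j := congrArg Prod.fst hc
    rw [h1] at h2
    simp at h2
  · have hb : b = !(a j) := by revert h; cases b <;> cases (a j) <;> simp
    rw [show (b, j) = (!(a j), j) by rw [hb], piA_apply_na]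
    intro hc
    have h1 : σ⁻¹ j = j := congrArg Prod.snd hc
    have h2 : a (σ⁻¹ j) = !(a j) := congrArg Prod.fst hc
    rw [h1] at h2
    simp at h2

lemma piA_invol (a : Fin n → Bool) (p : Bool × Fin n) :
    piA σ a (piA σ a p) = p := fA_invol σ a p

/-- Every element has a cycle-minimal companion. -/
lemma exists_min (j : Fin n) : ∃ m : Fin n, Pmin σ m ∧ σ.SameCycle m j := by
  classical
  set C := Finset.univ.filter (fun j' => σ.SameCycle j j') with hC
  have hj : j ∈ C := by
    simp only [hC, Finset.mem_filter, Finset.mem_univ, true_and]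
    exact Equiv.Perm.SameCycle.refl σ j
  have hne : C.Nonempty := ⟨j, hj⟩
  have hmem := Finset.min'_mem C hne
  have hsc : σ.SameCycle j (C.min' hne) := by
    simp only [hC, Finset.mem_filter] at hmem
    exact hmem.2
  refine ⟨C.min' hne, ?_, hsc.symm⟩
  intro j' hj'
  apply Finset.min'_le
  simp only [hC, Finset.mem_filter, Finset.mem_univ, true_and]
  exact hsc.trans hj'

lemma step {a b : Fin n → Bool} (h : piA σ a = piA σ b) {j : Fin n}
    (hj : a j = b j) : a (σ j) = b (σ j) := by
  have h1 := piA_apply_a σ a j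
  have h2 := piA_apply_a σ b j
  rw [← hj, ← h, h1] at h2
  have h3 : (!(a (σ j))) = !(b (σ j)) := congrArg Prod.fst h2
  simpa using h3

lemma step_pow {a b : Fin n → Bool} (h : piA σ a = piA σ b) (k : ℕ) {j : Fin n}
    (hj : a j = b j) : a ((σ ^ k) j) = b ((σ ^ k) j) := by
  induction k generalizing j with
  | zero => simpa using hj
  | succ k ih =>
    rw [pow_succ, Equiv.Perm.mul_apply]
    exact ih (step σ h hj)

lemma piA_injOn {a b : Fin n → Bool} (ha : ∀ j, Pmin σ j → a j = true)
    (hb : ∀ j, Pmin σ j → b j = true) (h : piA σ a = piA σ b) : a = b := by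
  funext j
  obtain ⟨m, hm, hsc⟩ := exists_min σ j
  obtain ⟨k, -, -, hk⟩ := hsc.exists_pow_eq''
  have hab : a m = b m := by rw [ha m hm, hb m hm]
  have := step_pow σ h k hab
  rwa [hk] at this

/-- A fixed point of `σ` is automatically cycle-minimal. -/
lemma pmin_of_fixed {j : Fin n} (hj : σ j = j) : Pmin σ j := by
  intro j' hj'
  obtain ⟨k, hk⟩ := hj'
  have : (σ ^ k) j = j := Function.IsFixedPt.perm_zpow hj k
  rw [← hk, this]

lemma mem_support_of_not_pmin {j : Fin n} (hj : ¬ Pmin σ j) : j ∈ σ.support := by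
  rw [Equiv.Perm.mem_support]
  intro hfix
  exact hj (pmin_of_fixed σ hfix)

end CountPairingsAux

open CountPairingsAux Finset

/-- The number of non-cycle-minimal points is `Σᵢ (|σᵢ| - 1)`. -/
lemma card_not_pmin (n : ℕ) (σ : Equiv.Perm (Fin n)) [DecidablePred (Pmin σ)] :
    (Finset.univ.filter fun j => ¬ Pmin σ j).card
      = σ.cycleType.sum - σ.cycleType.card := by
  classical
  have hu : (Finset.univ.filter fun j => ¬ Pmin σ j)
      = σ.support.filter fun j => ¬ Pmin σ j := by
    ext j
    simp only [Finset.mem_filter, Finset.mem_univ, true_and]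
    exact ⟨fun h => ⟨mem_support_of_not_pmin σ h, h⟩, fun h => h.2⟩
  have hsplit := Finset.card_filter_add_card_filter_not
    (s := σ.support) (Pmin σ)
  have hMc : (σ.support.filter (Pmin σ)).card = σ.cycleFactorsFinset.card := by
    apply Finset.card_bij (fun j _ => σ.cycleOf j)
    · intro j hj
      exact Equiv.Perm.cycleOf_mem_cycleFactorsFinset_iff.mpr
        (Finset.mem_filter.mp hj).1
    · intro j₁ hj₁ j₂ hj₂ heq
      obtain ⟨hs₁, hp₁⟩ := Finset.mem_filter.mp hj₁
      obtain ⟨hs₂, hp₂⟩ := Finset.mem_filter.mp hj₂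
      have h2 : j₂ ∈ (σ.cycleOf j₂).support :=
        Equiv.Perm.mem_support_cycleOf_iff.mpr ⟨Equiv.Perm.SameCycle.refl _ _, hs₂⟩
      rw [← heq] at h2
      have hsc : σ.SameCycle j₁ j₂ := (Equiv.Perm.mem_support_cycleOf_iff.mp h2).1
      exact le_antisymm (hp₁ j₂ hsc) (hp₂ j₁ hsc.symm)
    · intro c hc
      obtain ⟨hcyc, hagree⟩ := Equiv.Perm.mem_cycleFactorsFinset_iff.mp hc
      obtain ⟨x, hx, -⟩ := hcyc
      have hne : c.support.Nonempty := ⟨x, Equiv.Perm.mem_support.mpr hx⟩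
      set m := c.support.min' hne with hm
      have hmmem : m ∈ c.support := Finset.min'_mem _ _
      have hmsupp : m ∈ σ.support := by
        rw [Equiv.Perm.mem_support, ← hagree m hmmem]
        exact Equiv.Perm.mem_support.mp hmmem
      have hceq : c = σ.cycleOf m := Equiv.Perm.cycle_is_cycleOf hmmem hc
      have hpm : Pmin σ m := by
        intro j' hj'
        have : j' ∈ (σ.cycleOf m).support :=
          Equiv.Perm.mem_support_cycleOf_iff.mpr ⟨hj', hmsupp⟩
        rw [← hceq] at this
        exact Finset.min'_le _ _ this
      exact ⟨m, Finset.mem_filter.mpr ⟨hmsupp, hpm⟩, hceq.symm⟩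
  have hsum : σ.cycleType.sum = σ.support.card := Equiv.Perm.sum_cycleType σ
  have hcard : σ.cycleType.card = σ.cycleFactorsFinset.card := by
    rw [Equiv.Perm.cycleType_def, Multiset.card_map]
    rfl
  rw [hu, hsum, hcard, ← hMc]
  omega

/-- Counting pair partitions of `{1,2} × J` (encoded as fixed-point-free
involutions `π` of `Bool × Fin n`) whose trace-following algorithm produces a
given permutation `σ` of `J = Fin n`.  The trace is encoded by a level map
`a : Fin n → Bool` which equals `true` (level 1) at the minimal element of
each cycle of `σ` and satisfies `π (a j, j) = (¬ a (σ j), σ j)` (apply the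
pairing, then flip the level).  The number of such pairings is
`2 ^ (Σᵢ (|σᵢ| - 1))`, the exponent being the sum over the cycles of the
disjoint cycle decomposition of `σ`. -/
theorem count_pairings_with_given_trace_permutation
    (n : ℕ) (σ : Equiv.Perm (Fin n)) :
    Nat.card {π : Equiv.Perm (Bool × Fin n) //
        (∀ p, π p ≠ p) ∧ (∀ p, π (π p) = p) ∧
        ∃ a : Fin n → Bool,
          (∀ j : Fin n, (∀ j' : Fin n, σ.SameCycle j j' → j ≤ j') → a j = true) ∧
          (∀ j : Fin n, π (a j, j) = (!(a (σ j)), σ j)) }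
      = 2 ^ (σ.cycleType.sum - σ.cycleType.card) := by
  classical
  set S := {π : Equiv.Perm (Bool × Fin n) //
        (∀ p, π p ≠ p) ∧ (∀ p, π (π p) = p) ∧
        ∃ a : Fin n → Bool,
          (∀ j : Fin n, (∀ j' : Fin n, σ.SameCycle j j' → j ≤ j') → a j = true) ∧
          (∀ j : Fin n, π (a j, j) = (!(a (σ j)), σ j)) } with hS
  set L := {a : Fin n → Bool // ∀ j, Pmin σ j → a j = true} with hL
  -- the map from level maps to pairings
  have hΦ : Function.Bijective (fun a : L =>
      (⟨piA σ a.1, piA_ne σ a.1, piA_invol σ a.1,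
        a.1, a.2, fun j => piA_apply_a σ a.1 j⟩ : S)) := by
    constructor
    · intro a b hab
      have h : piA σ a.1 = piA σ b.1 := congrArg Subtype.val hab
      exact Subtype.ext (piA_injOn σ a.2 b.2 h)
    · rintro ⟨π, hne, hinv, a, hamin, htr⟩
      refine ⟨⟨a, hamin⟩, ?_⟩
      apply Subtype.ext
      show piA σ a = π
      apply Equiv.ext
      rintro ⟨b, j⟩
      have hna : π (!(a j), j) = (a (σ⁻¹ j), σ⁻¹ j) := by
        have h1 := htr (σ⁻¹ j)
        rw [show σ (σ⁻¹ j) = j from σ.apply_symm_apply j] at h1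
        have h2 := congrArg π h1
        rw [hinv] at h2
        exact h2.symm
      by_cases h : b = a j
      · rw [show ((b, j) : Bool × Fin n) = (a j, j) by rw [h],
          piA_apply_a, htr j]
      · have hb : b = !(a j) := by revert h; cases b <;> cases (a j) <;> simp
        rw [show ((b, j) : Bool × Fin n) = (!(a j), j) by rw [hb],
          piA_apply_na, hna]
  have h1 : Nat.card S = Nat.card L := (Nat.card_congr (Equiv.ofBijective _ hΦ)).symm
  -- count level maps
  have h2 : Nat.card L = 2 ^ (Finset.univ.filter fun j => ¬ Pmin σ j).card := by
    have e : L ≃ ({j : Fin n // ¬ Pmin σ j} → Bool) :=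
      { toFun := fun a j => a.1 j.1
        invFun := fun g => ⟨fun j => if h : Pmin σ j then true else g ⟨j, h⟩,
          fun j hj => dif_pos hj⟩
        left_inv := by
          rintro ⟨a, ha⟩
          apply Subtype.ext
          funext j
          by_cases h : Pmin σ j
          · simp only [dif_pos h]
            exact (ha j h).symm
          · simp only [dif_neg h]
        right_inv := by
          intro g
          funext j
          simp only [dif_neg j.2] }
    rw [Nat.card_congr e, Nat.card_fun, Nat.card_eq_fintype_card (α := Bool),
      Nat.card_eq_fintype_card, Fintype.card_subtype]
    simp
  rw [h1, h2, card_not_pmin]
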